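/- Let h : ℝ → ℝ be differentiable with h' integrable on ℝ, h(x) → 0 as x → −∞ and h(x) → 1 as x → +∞. Then for every bounded continuous function ψ : ℝ → ℝ, the integral ∫_ℝ (h(x/ε)² − h(x/ε))·(1/ε)·h'(x/ε)·ψ(x) dx tends to −(1/6)·ψ(0) as ε → 0⁺. -/

import Mathlib

/-!
Substituting x = ε y turns the integral into ∫ g(y) ψ(ε y) dy with g = (h² − h) h', which tends to
(∫ g) ψ(0) by dominated convergence. Since g is the derivative of h³/3 − h²/2, its integral is
(1/3 − 1/2) − 0 = −1/6.
-/

open MeasureTheory Filter Topology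

theorem Continuous.exists_forall_abs_le_of_tendsto {f : ℝ → ℝ} {a b : ℝ} (hf : Continuous f)
    (ha : Tendsto f atBot (𝓝 a)) (hb : Tendsto f atTop (𝓝 b)) : ∃ M, ∀ x, |f x| ≤ M := by
  obtain ⟨B, hB⟩ := eventually_atBot.1 (ha.abs.eventually (gt_mem_nhds (lt_add_one |a|)))
  obtain ⟨A, hA⟩ := eventually_atTop.1 (hb.abs.eventually (gt_mem_nhds (lt_add_one |b|)))
  obtain ⟨M, hM⟩ := (isCompact_Icc (a := B) (b := A)).exists_bound_of_continuousOn hf.continuousOn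
  refine ⟨max (max (|a| + 1) (|b| + 1)) M, fun x => ?_⟩
  rcases le_total x B with hxB | hBx
  · exact (hB x hxB).le.trans (le_max_of_le_left (le_max_left _ _))
  rcases le_total x A with hxA | hAx
  · exact (hM x ⟨hBx, hxA⟩).trans (le_max_right _ _)
  · exact (hA x hAx).le.trans (le_max_of_le_left (le_max_right _ _))

section Substitution

variable {F G h : ℝ → ℝ} {a b : ℝ}

theorem integrable_comp_mul_deriv (hF : Continuous F) (hh : Continuous h)
    (hi : Integrable (deriv h)) (ha : Tendsto h atBot (𝓝 a)) (hb : Tendsto h atTop (𝓝 b)) :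
    Integrable (fun y => F (h y) * deriv h y) := by
  obtain ⟨M, hM⟩ := (hF.comp hh).exists_forall_abs_le_of_tendsto
    ((hF.tendsto a).comp ha) ((hF.tendsto b).comp hb)
  exact hi.bdd_mul (hF.comp hh).aestronglyMeasurable (ae_of_all _ fun y => hM y)

theorem integral_comp_mul_deriv_of_tendsto (hG : ∀ x, HasDerivAt G (F x) x) (hF : Continuous F)
    (hd : Differentiable ℝ h) (hi : Integrable (deriv h))
    (ha : Tendsto h atBot (𝓝 a)) (hb : Tendsto h atTop (𝓝 b)) :
    ∫ y, F (h y) * deriv h y = G b - G a := by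
  have hGc : Continuous G := continuous_iff_continuousAt.2 fun x => (hG x).continuousAt
  refine integral_of_hasDerivAt_of_tendsto (fun y => (hG (h y)).comp y (hd y).hasDerivAt)
    (integrable_comp_mul_deriv hF hd.continuous hi ha hb) ?_ ?_
  · exact (hGc.tendsto a).comp ha
  · exact (hGc.tendsto b).comp hb

end Substitution

theorem integral_inv_mul_comp_div_mul (g ψ : ℝ → ℝ) {ε : ℝ} (hε : 0 < ε) :
    ∫ x, ε⁻¹ * g (x / ε) * ψ x = ∫ y, g y * ψ (ε * y) := by
  have hrw : (fun x => ε⁻¹ * g (x / ε) * ψ x) = fun x => ε⁻¹ * (g (x / ε) * ψ (ε * (x / ε))) := by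
    ext x
    rw [mul_div_cancel₀ x hε.ne']
    ring
  rw [hrw, Measure.integral_comp_div (fun y => ε⁻¹ * (g y * ψ (ε * y))), integral_const_mul,
    abs_of_pos hε, smul_eq_mul, ← mul_assoc, mul_inv_cancel₀ hε.ne', one_mul]

theorem tendsto_integral_mul_comp_mul_nhds_zero {g ψ : ℝ → ℝ} (hg : Integrable g)
    (hψ : Continuous ψ) {C : ℝ} (hC : ∀ x, |ψ x| ≤ C) :
    Tendsto (fun ε => ∫ y, g y * ψ (ε * y)) (𝓝 0) (𝓝 ((∫ y, g y) * ψ 0)) := by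
  rw [← integral_mul_const]
  refine tendsto_integral_filter_of_dominated_convergence (fun y => |g y| * C) ?_ ?_
    (hg.abs.mul_const C) ?_
  · exact .of_forall fun ε =>
      hg.aestronglyMeasurable.mul (hψ.comp (continuous_const_mul ε)).aestronglyMeasurable
  · refine .of_forall fun ε => ae_of_all _ fun y => ?_
    rw [Real.norm_eq_abs, abs_mul]
    exact mul_le_mul_of_nonneg_left (hC _) (abs_nonneg _)
  · refine ae_of_all _ fun y => tendsto_const_nhds.mul ((hψ.tendsto 0).comp ?_)
    exact (continuous_mul_const y).tendsto' 0 0 (zero_mul y)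

theorem stmt_7 (h : ℝ → ℝ) (hd : Differentiable ℝ h)
    (hi : Integrable (deriv h))
    (h0 : Tendsto h atBot (nhds 0)) (h1 : Tendsto h atTop (nhds 1))
    (ψ : ℝ → ℝ) (hc : Continuous ψ) (hb : ∃ C : ℝ, ∀ x, |ψ x| ≤ C) :
    Tendsto (fun ε : ℝ => ∫ x, (h (x / ε) ^ 2 - h (x / ε)) * ((1 / ε) * deriv h (x / ε)) * ψ x)
      (nhdsWithin 0 (Set.Ioi 0)) (nhds (-(1 / 6) * ψ 0)) := by
  obtain ⟨C, hC⟩ := hb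
  set g : ℝ → ℝ := fun y => (h y ^ 2 - h y) * deriv h y
  have hF : Continuous fun t : ℝ => t ^ 2 - t := by fun_prop
  have hG (t : ℝ) : HasDerivAt (fun t : ℝ => t ^ 3 / 3 - t ^ 2 / 2) (t ^ 2 - t) t := by
    have := ((hasDerivAt_pow 3 t).div_const 3).sub ((hasDerivAt_pow 2 t).div_const 2)
    exact this.congr_deriv (by norm_num)
  have hg : Integrable g := integrable_comp_mul_deriv hF hd.continuous hi h0 h1
  have hg_int : ∫ y, g y = -(1 / 6) := by
    rw [integral_comp_mul_deriv_of_tendsto hG hF hd hi h0 h1]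
    norm_num
  rw [← hg_int]
  refine ((tendsto_integral_mul_comp_mul_nhds_zero hg hc hC).mono_left nhdsWithin_le_nhds).congr' ?_
  filter_upwards [self_mem_nhdsWithin] with ε (hε : 0 < ε)
  rw [← integral_inv_mul_comp_div_mul g ψ hε]
  congr 1 with x
  simp only [g]
  ring
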